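/- arXiv:2203.08358 — 2 statements merged into one kernel-verified Lean document; each statement's English description precedes it below -/
import Mathlib

section
/- Let d ≥ 1 and let p, q be real numbers with 0 ≤ p ≤ 2q. There exists a constant c = c(p,q) > 0 such that for every τ > 0 and every measurable function g : ℝ^d → ℂ, one has ∫_{ℝ^d} |ξ|^{2q} |g(ξ)|² dξ ≤ c · τ^{p−2q} · ( ∫_{ℝ^d} |g(ξ)|² dξ )^{1/2} · ( ∫_{ℝ^d} |ξ|^{2p} e^{2τ|ξ|} |g(ξ)|² dξ )^{1/2}, where all integrals are Lebesgue integrals with values in [0,∞]. (Via Plancherel with g = 𝓕u, this is the Oliver–Titi inequality ‖Λ^q u‖_{L²}² ≤ c τ^{p−2q} ‖u‖_{L²} ‖Λ^p e^{τΛ} u‖_{L²}.) -/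
open MeasureTheory Real
open scoped ENNReal Nat

/-! With `r = ‖ξ‖` and `s = 4q - 2p ≥ 0`, the elementary bound `(τ r)^s ≤ ⌈s⌉! e^{τ r}` gives
`r^{4q} = r^{2p} r^s ≤ ⌈s⌉! τ^{-s} r^{2p} e^{2τ r}`, i.e. the weight `r^{2q}` is at most
`√⌈s⌉! τ^{p-2q}` times the square root of `r^{2p} e^{2τ r}`. Cauchy–Schwarz against the
measure `|g|² dξ` then yields the inequality with `c = √⌈s⌉!`. -/

theorem rpow_le_factorial_ceil_mul_exp {s t : ℝ} (hs : 0 ≤ s) (ht : 0 ≤ t) :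
    t ^ s ≤ (⌈s⌉₊)! * exp t := by
  have hfac : (1 : ℝ) ≤ (⌈s⌉₊)! := mod_cast Nat.one_le_iff_ne_zero.mpr (Nat.factorial_ne_zero _)
  rcases le_or_gt t 1 with ht1 | ht1
  · calc t ^ s ≤ 1 := rpow_le_one ht ht1 hs
      _ ≤ (⌈s⌉₊)! * exp t := one_le_mul_of_one_le_of_one_le hfac (one_le_exp ht)
  · calc t ^ s ≤ t ^ (⌈s⌉₊ : ℝ) := rpow_le_rpow_of_exponent_le ht1.le (Nat.le_ceil s)
      _ = t ^ ⌈s⌉₊ := rpow_natCast t _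
      _ ≤ (⌈s⌉₊)! * exp t := by
        rw [← div_le_iff₀' (by positivity)]
        exact pow_div_factorial_le_exp t ht _

theorem rpow_add_le_factorial_ceil_mul_rpow_mul_exp {r τ a s : ℝ} (hr : 0 ≤ r) (hτ : 0 < τ)
    (ha : 0 ≤ a) (hs : 0 ≤ s) :
    r ^ (a + s) ≤ (⌈s⌉₊)! * τ ^ (-s) * (r ^ a * exp (τ * r)) := by
  have hτr := rpow_le_factorial_ceil_mul_exp hs (mul_nonneg hτ.le hr)
  rw [mul_rpow hτ.le hr, ← le_div_iff₀' (by positivity), div_eq_mul_inv, ← rpow_neg hτ.le] at hτr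
  calc r ^ (a + s) = r ^ a * r ^ s := rpow_add_of_nonneg hr ha hs
    _ ≤ r ^ a * ((⌈s⌉₊)! * exp (τ * r) * τ ^ (-s)) := by gcongr
    _ = (⌈s⌉₊)! * τ ^ (-s) * (r ^ a * exp (τ * r)) := by ring

theorem sq_rpow_le_sq_mul_rpow_mul_exp {r τ p q : ℝ} (hr : 0 ≤ r) (hτ : 0 < τ) (hp : 0 ≤ p)
    (hpq : p ≤ 2 * q) :
    (r ^ (2 * q)) ^ 2 ≤
      (√(⌈4 * q - 2 * p⌉₊)! * τ ^ (p - 2 * q)) ^ 2 * (r ^ (2 * p) * exp (2 * τ * r)) := by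
  have hsplit := rpow_add_le_factorial_ceil_mul_rpow_mul_exp hr hτ
    (by linarith : 0 ≤ 2 * p) (by linarith : 0 ≤ 4 * q - 2 * p)
  calc (r ^ (2 * q)) ^ 2 = r ^ (2 * p + (4 * q - 2 * p)) := by
        rw [← rpow_mul_natCast hr]; ring_nf
    _ ≤ (⌈4 * q - 2 * p⌉₊)! * τ ^ (-(4 * q - 2 * p)) * (r ^ (2 * p) * exp (τ * r)) := hsplit
    _ ≤ (√(⌈4 * q - 2 * p⌉₊)! * τ ^ (p - 2 * q)) ^ 2 * (r ^ (2 * p) * exp (2 * τ * r)) := by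
        rw [mul_pow, sq_sqrt (by positivity), ← rpow_mul_natCast hτ.le,
          show (p - 2 * q) * (2 : ℕ) = -(4 * q - 2 * p) by push_cast; ring]
        gcongr
        linarith [mul_nonneg hτ.le hr]

theorem lintegral_mul_le_of_sq_le_mul {α : Type*} [MeasurableSpace α] {μ : Measure α}
    {F w v : α → ℝ≥0∞} {K : ℝ≥0∞} (hF : AEMeasurable F μ) (hv : AEMeasurable v μ)
    (hwv : ∀ x, w x ^ 2 ≤ K ^ 2 * v x) :
    ∫⁻ x, w x * F x ∂μ ≤
      K * (∫⁻ x, F x ∂μ) ^ (1 / 2 : ℝ) * (∫⁻ x, v x * F x ∂μ) ^ (1 / 2 : ℝ) := by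
  have sq_rpow_half (y : ℝ≥0∞) : (y ^ 2) ^ (1 / 2 : ℝ) = y := by
    simpa using ENNReal.pow_rpow_inv_natCast two_ne_zero y
  have rpow_half_sq (y : ℝ≥0∞) : (y ^ (1 / 2 : ℝ)) ^ 2 = y := by
    simpa using ENNReal.rpow_inv_natCast_pow two_ne_zero y
  have hvF : AEMeasurable (fun x => v x * F x) μ := hv.mul hF
  have hpointwise (x : α) :
      w x * F x ≤ F x ^ (1 / 2 : ℝ) * (K ^ 2 * (v x * F x)) ^ (1 / 2 : ℝ) :=
    calc w x * F x = (w x ^ 2) ^ (1 / 2 : ℝ) * (F x ^ (1 / 2 : ℝ)) ^ 2 := by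
          rw [sq_rpow_half, rpow_half_sq]
      _ ≤ (K ^ 2 * v x) ^ (1 / 2 : ℝ) * (F x ^ (1 / 2 : ℝ)) ^ 2 := by gcongr; exact hwv x
      _ = F x ^ (1 / 2 : ℝ) * (K ^ 2 * (v x * F x)) ^ (1 / 2 : ℝ) := by
          rw [← mul_assoc, ENNReal.mul_rpow_of_nonneg (K ^ 2 * v x) (F x) (by norm_num)]; ring
  calc ∫⁻ x, w x * F x ∂μ
      ≤ ∫⁻ x, F x ^ (1 / 2 : ℝ) * (K ^ 2 * (v x * F x)) ^ (1 / 2 : ℝ) ∂μ :=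
        lintegral_mono hpointwise
    _ ≤ (∫⁻ x, F x ∂μ) ^ (1 / 2 : ℝ) * (∫⁻ x, K ^ 2 * (v x * F x) ∂μ) ^ (1 / 2 : ℝ) :=
        ENNReal.lintegral_mul_norm_pow_le hF (hvF.const_mul _)
          (by norm_num) (by norm_num) (by norm_num)
    _ = K * (∫⁻ x, F x ∂μ) ^ (1 / 2 : ℝ) * (∫⁻ x, v x * F x ∂μ) ^ (1 / 2 : ℝ) := by
        rw [lintegral_const_mul'' _ hvF, ENNReal.mul_rpow_of_nonneg _ _ (by norm_num),
          sq_rpow_half]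
        ring

theorem oliver_titi_frequency_inequality_general (d : ℕ) (p q : ℝ)
    (hp : 0 ≤ p) (hpq : p ≤ 2 * q) :
    ∃ c : ℝ, 0 < c ∧ ∀ τ : ℝ, 0 < τ →
      ∀ g : EuclideanSpace ℝ (Fin d) → ℂ, Measurable g →
        (∫⁻ ξ : EuclideanSpace ℝ (Fin d),
            ENNReal.ofReal (‖ξ‖ ^ (2 * q) * ‖g ξ‖ ^ 2))
          ≤ ENNReal.ofReal (c * τ ^ (p - 2 * q))
            * (∫⁻ ξ : EuclideanSpace ℝ (Fin d),
                ENNReal.ofReal (‖g ξ‖ ^ 2)) ^ (1 / 2 : ℝ)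
            * (∫⁻ ξ : EuclideanSpace ℝ (Fin d),
                ENNReal.ofReal
                  (‖ξ‖ ^ (2 * p) * Real.exp (2 * τ * ‖ξ‖) * ‖g ξ‖ ^ 2))
                ^ (1 / 2 : ℝ) := by
  refine ⟨√(⌈4 * q - 2 * p⌉₊)!, by positivity, fun τ hτ g hg => ?_⟩
  have hweight (ξ : EuclideanSpace ℝ (Fin d)) :
      ENNReal.ofReal (‖ξ‖ ^ (2 * q)) ^ 2 ≤
        ENNReal.ofReal (√(⌈4 * q - 2 * p⌉₊)! * τ ^ (p - 2 * q)) ^ 2 *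
          ENNReal.ofReal (‖ξ‖ ^ (2 * p) * exp (2 * τ * ‖ξ‖)) := by
    rw [← ENNReal.ofReal_pow (by positivity), ← ENNReal.ofReal_pow (by positivity),
      ← ENNReal.ofReal_mul (by positivity)]
    exact ENNReal.ofReal_le_ofReal (sq_rpow_le_sq_mul_rpow_mul_exp (norm_nonneg ξ) hτ hp hpq)
  have hv : Measurable fun ξ : EuclideanSpace ℝ (Fin d) =>
      ENNReal.ofReal (‖ξ‖ ^ (2 * p) * exp (2 * τ * ‖ξ‖)) := by fun_prop
  simp only [ENNReal.ofReal_mul' (sq_nonneg ‖g _‖)]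
  exact lintegral_mul_le_of_sq_le_mul (hg.norm.pow_const 2).ennreal_ofReal.aemeasurable
    hv.aemeasurable hweight

/-- Frequency-side Oliver–Titi inequality: for `0 ≤ p ≤ 2q` there is
`c = c(p,q) > 0` with
`∫ |ξ|^{2q}|g|² ≤ c τ^{p−2q} (∫|g|²)^{1/2} (∫ |ξ|^{2p} e^{2τ|ξ|}|g|²)^{1/2}`
for every `τ > 0` and measurable `g`, all integrals taken in `[0,∞]`. -/
theorem oliver_titi_frequency_inequality (d : ℕ) (hd : 1 ≤ d) (p q : ℝ)
    (hp : 0 ≤ p) (hpq : p ≤ 2 * q) :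
    ∃ c : ℝ, 0 < c ∧ ∀ τ : ℝ, 0 < τ →
      ∀ g : EuclideanSpace ℝ (Fin d) → ℂ, Measurable g →
        (∫⁻ ξ : EuclideanSpace ℝ (Fin d),
            ENNReal.ofReal (‖ξ‖ ^ (2 * q) * ‖g ξ‖ ^ 2))
          ≤ ENNReal.ofReal (c * τ ^ (p - 2 * q))
            * (∫⁻ ξ : EuclideanSpace ℝ (Fin d),
                ENNReal.ofReal (‖g ξ‖ ^ 2)) ^ (1 / 2 : ℝ)
            * (∫⁻ ξ : EuclideanSpace ℝ (Fin d),
                ENNReal.ofReal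
                  (‖ξ‖ ^ (2 * p) * Real.exp (2 * τ * ‖ξ‖) * ‖g ξ‖ ^ 2))
                ^ (1 / 2 : ℝ) :=
  oliver_titi_frequency_inequality_general d p q hp hpq
end

section
/- Let d, n ≥ 1, let ν̄, κ̄, α ∈ ℝ with α² − ν̄ α + κ̄ = 0, and let A, M, G : ℝ × ℝ^d → ℝ^n be functions such that A and M are continuously differentiable in t and twice continuously differentiable in x. Suppose that for all (t,x): ∂_t A(t,x) + Δ M(t,x) = 0 and ∂_t M(t,x) − ν̄ Δ M(t,x) − κ̄ Δ A(t,x) = G(t,x), where Δ denotes the spatial Laplacian acting componentwise. Then the effective velocity W := M + α A satisfies ∂_t W(t,x) − (ν̄ − α) Δ W(t,x) = G(t,x) for all (t,x). -/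
/-!
Substituting `∂ₜA = -ΔM` into `∂ₜ(M + αA)`, the `ΔM` terms of `∂ₜW - (ν̄ - α)ΔW` collapse to
`-ν̄ ΔM`, while `ΔA` acquires the coefficient `α(α - ν̄) = -κ̄` precisely because `α` is a root of
`α² - ν̄α + κ̄`; what remains is the second equation.
-/

open Real

noncomputable def spaceLaplacian {d : ℕ} {F : Type*} [NormedAddCommGroup F]
    [NormedSpace ℝ F] (f : EuclideanSpace ℝ (Fin d) → F)
    (x : EuclideanSpace ℝ (Fin d)) : F :=
  ∑ i : Fin d,
    fderiv ℝ (fun y => fderiv ℝ f y (EuclideanSpace.single i 1)) x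
      (EuclideanSpace.single i 1)

section Linearity

variable {E F : Type*} [NormedAddCommGroup E] [NormedSpace ℝ E]
  [NormedAddCommGroup F] [NormedSpace ℝ F]

theorem fderiv_add_const_smul {f g : E → F} {x : E} (hf : DifferentiableAt ℝ f x)
    (hg : DifferentiableAt ℝ g x) (c : ℝ) :
    fderiv ℝ (fun y => f y + c • g y) x = fderiv ℝ f x + c • fderiv ℝ g x :=
  (hf.hasFDerivAt.add (hg.hasFDerivAt.const_smul c)).fderiv

theorem spaceLaplacian_add_const_smul {d : ℕ} {f g : EuclideanSpace ℝ (Fin d) → F}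
    (hf : ContDiff ℝ 2 f) (hg : ContDiff ℝ 2 g) (c : ℝ) (x : EuclideanSpace ℝ (Fin d)) :
    spaceLaplacian (fun y => f y + c • g y) x
      = spaceLaplacian f x + c • spaceLaplacian g x := by
  have hDf : Differentiable ℝ (fderiv ℝ f) :=
    (hf.fderiv_right (by norm_num)).differentiable one_ne_zero
  have hDg : Differentiable ℝ (fderiv ℝ g) :=
    (hg.fderiv_right (by norm_num)).differentiable one_ne_zero
  have hdir : ∀ v, (fun y => fderiv ℝ (fun z => f z + c • g z) y v)
      = fun y => fderiv ℝ f y v + c • fderiv ℝ g y v := fun v => funext fun y => by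
    rw [fderiv_add_const_smul (hf.differentiable two_ne_zero y)
      (hg.differentiable two_ne_zero y)]
    rfl
  simp only [spaceLaplacian, Finset.smul_sum, ← Finset.sum_add_distrib, hdir]
  refine Finset.sum_congr rfl fun i _ => ?_
  rw [fderiv_add_const_smul ((hDf.clm_apply (differentiable_const _)) x)
    ((hDg.clm_apply (differentiable_const _)) x)]
  rfl

end Linearity

theorem sub_smul_add_smul_eq_of_quadratic_root {E : Type*} [AddCommGroup E] [Module ℝ E]
    {ν κ α : ℝ} (hroot : α ^ 2 - ν * α + κ = 0) {a m g lapA lapM : E}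
    (h₁ : a + lapM = 0) (h₂ : m - ν • lapM - κ • lapA = g) :
    m + α • a - (ν - α) • (lapM + α • lapA) = g := by
  rw [eq_neg_of_add_eq_zero_left h₁, ← h₂]
  match_scalars <;> linarith

theorem effective_velocity_heat_equation_general (d n : ℕ)
    (ν κ α : ℝ) (hroot : α ^ 2 - ν * α + κ = 0)
    (A M G : ℝ → EuclideanSpace ℝ (Fin d) → EuclideanSpace ℝ (Fin n))
    (hAt : ∀ x, ContDiff ℝ 1 fun t => A t x)
    (hMt : ∀ x, ContDiff ℝ 1 fun t => M t x)
    (hAx : ∀ t, ContDiff ℝ 2 (A t))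
    (hMx : ∀ t, ContDiff ℝ 2 (M t))
    (heq1 : ∀ t x, deriv (fun s => A s x) t + spaceLaplacian (M t) x = 0)
    (heq2 : ∀ t x,
      deriv (fun s => M s x) t - ν • spaceLaplacian (M t) x
        - κ • spaceLaplacian (A t) x = G t x) :
    ∀ t x,
      deriv (fun s => M s x + α • A s x) t
        - (ν - α) • spaceLaplacian (fun y => M t y + α • A t y) x = G t x := by
  intro t x
  have hWt : deriv (fun s => M s x + α • A s x) t
      = deriv (fun s => M s x) t + α • deriv (fun s => A s x) t :=
    (((hMt x).differentiable one_ne_zero t).hasDerivAt.add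
      (((hAt x).differentiable one_ne_zero t).hasDerivAt.const_smul α)).deriv
  rw [hWt, spaceLaplacian_add_const_smul (hMx t) (hAx t)]
  exact sub_smul_add_smul_eq_of_quadratic_root hroot (heq1 t x) (heq2 t x)

/-- If `∂_t A + ΔM = 0` and `∂_t M − ν̄ΔM − κ̄ΔA = G` with
`α² − ν̄α + κ̄ = 0`, then the effective velocity `W = M + αA` solves the heat
equation `∂_t W − (ν̄−α)ΔW = G`. -/
theorem effective_velocity_heat_equation (d n : ℕ) (hd : 1 ≤ d) (hn : 1 ≤ n)
    (ν κ α : ℝ) (hroot : α ^ 2 - ν * α + κ = 0)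
    (A M G : ℝ → EuclideanSpace ℝ (Fin d) → EuclideanSpace ℝ (Fin n))
    (hAt : ∀ x, ContDiff ℝ 1 fun t => A t x)
    (hMt : ∀ x, ContDiff ℝ 1 fun t => M t x)
    (hAx : ∀ t, ContDiff ℝ 2 (A t))
    (hMx : ∀ t, ContDiff ℝ 2 (M t))
    (heq1 : ∀ t x, deriv (fun s => A s x) t + spaceLaplacian (M t) x = 0)
    (heq2 : ∀ t x,
      deriv (fun s => M s x) t - ν • spaceLaplacian (M t) x
        - κ • spaceLaplacian (A t) x = G t x) :
    ∀ t x,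
      deriv (fun s => M s x + α • A s x) t
        - (ν - α) • spaceLaplacian (fun y => M t y + α • A t y) x = G t x :=
  effective_velocity_heat_equation_general d n ν κ α hroot A M G hAt hMt hAx hMx heq1 heq2
end
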